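/- The linear code D_I ⊆ Z_{2^k}^n generated by the rows of B_I (equivalently, D_I = H_I^⊥) has cardinality n·2^k and minimum d*-distance n·2^{k-2}; consequently φ(D_I) is a binary Hadamard (n·2^{k-1}, n·2^k, n·2^{k-2}) code. -/

import Mathlib

/-- `wt*` on `Z_{2^k}`. -/
def wtStarK (k : ℕ) (x : ZMod (2 ^ k)) : ℕ :=
  if x = 0 then 0 else if x = (2 ^ (k - 1) : ZMod (2 ^ k)) then 2 ^ (k - 1) else 2 ^ (k - 2)

/-- The induced distance `d*` on `Z_{2^k}^n`. -/
def dStarK (k n : ℕ) (x y : Fin n → ZMod (2 ^ k)) : ℕ :=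
  ∑ i, wtStarK k (y i - x i)

/-- Index type for the rows of `B_I`. -/
def colIdx (k : ℕ) (I : Fin k → ℕ) : Type :=
  Unit ⊕ (Σ j : Fin k, Fin (I j))

instance (k : ℕ) (I : Fin k → ℕ) : Fintype (colIdx k I) := by
  unfold colIdx; infer_instance

/-- The set `{1} × (2^{k-1}Z_{2^k})^{i_1} × … × (2^0 Z_{2^k})^{i_k}` of columns of `B_I`. -/
def colSet (k : ℕ) (I : Fin k → ℕ) : Set (colIdx k I → ZMod (2 ^ k)) :=
  {v | v (Sum.inl ()) = 1 ∧
    ∀ (j : Fin k) (t : Fin (I j)),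
      ∃ c : ZMod (2 ^ k), v (Sum.inr ⟨j, t⟩) = (2 ^ (k - 1 - j.val) : ZMod (2 ^ k)) * c}

/-!
A codeword is `z = b *ᵥ c`, i.e. `z i = b i ⬝ᵥ c`. Every column is `colScale * m` with `m` having
first entry `1`, so `z` depends on `c` only through `colScale * c`; testing against the columns
`e₀` and `e₀ + e_p` shows that `z` determines `colScale * c` as well. The vectors `colScale * c` are
exactly the columns with their first entry replaced by an arbitrary `α`, whence `|D| = 2^k · n`.

For the distance, let `z ≠ 0` vanish at `j₀` and pick `a` with `a · z j₁ = 2^(k-1)`. Translating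
all columns by `a • (b j₁ - b j₀)` permutes them and adds `2^(k-1)` to every coordinate of `z`, so
`z` has at least as many coordinates equal to `2^(k-1)` (of weight `2^(k-1)`) as zero coordinates,
and every other nonzero coordinate has weight `2^(k-2)`. The Gray map is injective and, by the
complement property of `a`, dominates `d*` coordinatewise.
-/

open Matrix Finset

section LinearAlgebra
variable {R : Type*} [CommRing R] {ι : Type*} [Fintype ι]

lemma coe_span_col_eq_range_mulVec {m : Type*} (M : Matrix m ι R) :
    (Submodule.span R (Set.range fun j i => M i j) : Set (m → R)) = Set.range (M *ᵥ ·) := by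
  rw [show (fun j i => M i j) = M.col from rfl, ← range_mulVecLin, LinearMap.coe_range]
  rfl

lemma mul_dotProduct_eq_dotProduct_mul (s u v : ι → R) : (s * u) ⬝ᵥ v = u ⬝ᵥ (s * v) :=
  Finset.sum_congr rfl fun _ _ => by simp only [Pi.mul_apply]; ring

lemma eq_of_forall_dotProduct_eq [DecidableEq ι] (i₀ : ι) {x y : ι → R}
    (h : ∀ m : ι → R, m i₀ = 1 → m ⬝ᵥ x = m ⬝ᵥ y) : x = y := by
  have h₀ : x i₀ = y i₀ := by simpa using h (Pi.single i₀ 1) (by simp)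
  funext t
  by_cases ht : t = i₀
  · rw [ht, h₀]
  · have := h (Pi.single i₀ 1 + Pi.single t 1) (by simp [Ne.symm ht])
    simpa only [add_dotProduct, single_dotProduct, one_mul, h₀, add_right_inj] using this

end LinearAlgebra

lemma Nat.card_range_eq_of_forall_eq_iff {α β γ : Type*} {f : α → β} {g : α → γ}
    (h : ∀ x y, f x = f y ↔ g x = g y) : Nat.card (Set.range f) = Nat.card (Set.range g) :=
  Nat.card_congr <| (Setoid.quotientKerEquivRange f).symm.trans <|
    (Quotient.congrRight h).trans (Setoid.quotientKerEquivRange g)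

lemma hammingDist_uncurry {ι κ β : Type*} [Fintype ι] [Fintype κ] [DecidableEq β]
    (u v : ι → κ → β) :
    hammingDist (fun p : ι × κ => u p.1 p.2) (fun p => v p.1 p.2) =
      ∑ i, hammingDist (u i) (v i) := by
  simp only [hammingDist, Finset.card_filter, Fintype.sum_prod_type]

section TwoPower
variable {k : ℕ}

lemma two_pow_pred_ne_zero (hk : 0 < k) : (2 : ZMod (2 ^ k)) ^ (k - 1) ≠ 0 := by
  rw [show (2 : ZMod (2 ^ k)) ^ (k - 1) = ((2 ^ (k - 1) : ℕ) : ZMod (2 ^ k)) by push_cast; rfl,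
    Ne, ZMod.natCast_eq_zero_iff]
  exact Nat.not_dvd_of_pos_of_lt (by positivity) (Nat.pow_lt_pow_right one_lt_two (by omega))

lemma eq_zero_or_eq_two_pow_pred_of_two_mul_eq_zero (hk : 0 < k) {x : ZMod (2 ^ k)}
    (hx : 2 * x = 0) : x = 0 ∨ x = 2 ^ (k - 1) := by
  obtain ⟨k, rfl⟩ : ∃ k', k = k' + 1 := ⟨k - 1, by omega⟩
  have hx' : ((2 * x.val : ℕ) : ZMod (2 ^ (k + 1))) = 0 := by
    push_cast [ZMod.natCast_zmod_val]; exact hx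
  have hlt := x.val_lt
  rw [ZMod.natCast_eq_zero_iff] at hx'
  rw [add_tsub_cancel_right, ← ZMod.natCast_zmod_val x]
  generalize x.val = v at hx' hlt ⊢
  rw [pow_succ'] at hx' hlt
  obtain ⟨q, rfl⟩ := Nat.dvd_of_mul_dvd_mul_left two_pos hx'
  rw [mul_comm 2] at hlt
  have hq : q < 2 := Nat.lt_of_mul_lt_mul_left hlt
  interval_cases q <;> simp

lemma exists_mul_eq_two_pow_pred (hk : 0 < k) {m : ZMod (2 ^ k)} (hm : m ≠ 0) :
    ∃ c : ZMod (2 ^ k), c * m = 2 ^ (k - 1) := by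
  classical
  have hex : ∃ j, (2 : ZMod (2 ^ k)) ^ j * m = 0 :=
    ⟨k, by rw [show (2 : ZMod (2 ^ k)) ^ k = ((2 ^ k : ℕ) : ZMod (2 ^ k)) by push_cast; rfl,
      ZMod.natCast_self, zero_mul]⟩
  -- the last nonzero element of the sequence `2^j * m` is killed by 2
  have hpos : Nat.find hex ≠ 0 := fun h => hm (by simpa [h] using Nat.find_spec hex)
  have hlast : 2 * (2 ^ (Nat.find hex - 1) * m) = 0 := by
    rw [← mul_assoc, ← pow_succ', Nat.sub_add_cancel (Nat.pos_of_ne_zero hpos)]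
    exact Nat.find_spec hex
  refine ⟨2 ^ (Nat.find hex - 1), ?_⟩
  exact (eq_zero_or_eq_two_pow_pred_of_two_mul_eq_zero hk hlast).resolve_left
    (Nat.find_min hex (by omega))

end TwoPower

section Weight
variable {k : ℕ}

lemma two_pow_mul_ite_add_ite_le_wtStarK (hk : 2 ≤ k) (x : ZMod (2 ^ k)) :
    2 ^ (k - 2) * ((if x = 0 then 0 else 1) + if x = 2 ^ (k - 1) then 1 else 0) ≤
      wtStarK k x := by
  have hhalf := two_pow_pred_ne_zero (k := k) (by omega)
  have hpow : 2 ^ (k - 2) * 2 = 2 ^ (k - 1) := by rw [← pow_succ]; congr 1; omega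
  unfold wtStarK
  split_ifs <;> simp_all

lemma card_mul_le_sum_wtStarK (hk : 2 ≤ k) {ι : Type*} [Fintype ι] (z : ι → ZMod (2 ^ k))
    (hz : #{i | z i = 0} ≤ #{i | z i = 2 ^ (k - 1)}) :
    Fintype.card ι * 2 ^ (k - 2) ≤ ∑ i, wtStarK k (z i) := by
  classical
  calc Fintype.card ι * 2 ^ (k - 2)
      = 2 ^ (k - 2) * (#{i | ¬z i = 0} + #{i | z i = 0}) := by
        rw [mul_comm, add_comm, Finset.card_filter_add_card_filter_not, Finset.card_univ]
    _ ≤ 2 ^ (k - 2) * (#{i | ¬z i = 0} + #{i | z i = 2 ^ (k - 1)}) := by gcongr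
    _ = ∑ i, 2 ^ (k - 2) * ((if z i = 0 then 0 else 1) + if z i = 2 ^ (k - 1) then 1 else 0) := by
        simp only [Finset.card_filter, ← Finset.mul_sum, Finset.sum_add_distrib, ite_not]
    _ ≤ ∑ i, wtStarK k (z i) :=
        Finset.sum_le_sum fun i _ => two_pow_mul_ite_add_ite_le_wtStarK hk (z i)

lemma wtStarK_sub_le_hammingDist (a : ZMod (2 ^ k) → Fin (2 ^ (k - 1)) → ZMod 2)
    (ha_compl : ∀ x : ZMod (2 ^ k), a (x + (2 ^ (k - 1) : ZMod (2 ^ k))) = a x + 1)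
    (ha_dist : ∀ x y : ZMod (2 ^ k), x ≠ y → 2 ^ (k - 2) ≤ hammingDist (a x) (a y))
    (x y : ZMod (2 ^ k)) : wtStarK k (y - x) ≤ hammingDist (a x) (a y) := by
  unfold wtStarK
  split_ifs with h0 hhalf
  · exact Nat.zero_le _
  · rw [eq_add_of_sub_eq' hhalf, ha_compl, hammingDist_comm]
    simp [hammingDist]
  · exact ha_dist x y (Ne.symm (sub_ne_zero.1 h0))

lemma dStarK_le_hammingDist {n : ℕ} (a : ZMod (2 ^ k) → Fin (2 ^ (k - 1)) → ZMod 2)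
    (ha_compl : ∀ x : ZMod (2 ^ k), a (x + (2 ^ (k - 1) : ZMod (2 ^ k))) = a x + 1)
    (ha_dist : ∀ x y : ZMod (2 ^ k), x ≠ y → 2 ^ (k - 2) ≤ hammingDist (a x) (a y))
    (x y : Fin n → ZMod (2 ^ k)) :
    dStarK k n x y ≤
      hammingDist (fun p : Fin n × Fin (2 ^ (k - 1)) => a (x p.1) p.2) (fun p => a (y p.1) p.2) :=
  (Finset.sum_le_sum fun i _ => wtStarK_sub_le_hammingDist a ha_compl ha_dist (x i) (y i)).trans
    (hammingDist_uncurry _ _).ge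

end Weight

section ScaledSlice
variable {R : Type*} [CommRing R] {ι : Type*}

def scaledSlice (s : ι → R) (i₀ : ι) : Set (ι → R) :=
  {v | ∃ m, m i₀ = 1 ∧ s * m = v}

variable {s : ι → R} {i₀ : ι}

lemma add_smul_sub_mem_scaledSlice {u v w : ι → R} (hu : u ∈ scaledSlice s i₀)
    (hv : v ∈ scaledSlice s i₀) (hw : w ∈ scaledSlice s i₀) (a : R) :
    u + a • (v - w) ∈ scaledSlice s i₀ := by
  obtain ⟨mu, hmu, rfl⟩ := hu
  obtain ⟨mv, hmv, rfl⟩ := hv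
  obtain ⟨mw, hmw, rfl⟩ := hw
  exact ⟨mu + a • (mv - mw), by simp [hmu, hmv, hmw], by rw [mul_add, mul_smul_comm, mul_sub]⟩

lemma mul_update_eq_update_mul [DecidableEq ι] (hs : s i₀ = 1) (m : ι → R) (α : R) :
    s * Function.update m i₀ α = Function.update (s * m) i₀ α := by
  funext i
  rcases eq_or_ne i i₀ with rfl | hi
  · simp [hs]
  · simp [hi]

variable {κ : Type*} {b : κ → ι → R}

lemma mulVec_eq_mulVec_iff_mul_eq_mul [Fintype ι] [DecidableEq ι]
    (hb : Set.range b = scaledSlice s i₀) {c c' : ι → R} : b *ᵥ c = b *ᵥ c' ↔ s * c = s * c' := by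
  constructor
  · intro h
    refine eq_of_forall_dotProduct_eq i₀ fun m hm => ?_
    obtain ⟨i, hi⟩ : s * m ∈ Set.range b := hb ▸ ⟨m, hm, rfl⟩
    rw [← mul_dotProduct_eq_dotProduct_mul, ← mul_dotProduct_eq_dotProduct_mul, ← hi]
    exact congrFun h i
  · intro h
    funext i
    obtain ⟨m, -, hm⟩ : b i ∈ scaledSlice s i₀ := hb ▸ Set.mem_range_self i
    change b i ⬝ᵥ c = b i ⬝ᵥ c'
    rw [← hm, mul_dotProduct_eq_dotProduct_mul, mul_dotProduct_eq_dotProduct_mul, h]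

variable [DecidableEq ι]

lemma range_mul_eq_range_update (hs : s i₀ = 1) (hb : Set.range b = scaledSlice s i₀) :
    Set.range (s * ·) = Set.range fun p : R × κ => Function.update (b p.2) i₀ p.1 := by
  ext u
  constructor
  · rintro ⟨c, rfl⟩
    obtain ⟨j, hj⟩ : Function.update (s * c) i₀ 1 ∈ Set.range b :=
      hb ▸ ⟨Function.update c i₀ 1, by simp, mul_update_eq_update_mul hs c 1⟩
    exact ⟨((s * c) i₀, j), by simp only [hj, Function.update_idem, Function.update_eq_self]⟩
  · rintro ⟨⟨α, j⟩, rfl⟩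
    obtain ⟨m, -, hm⟩ : b j ∈ scaledSlice s i₀ := hb ▸ Set.mem_range_self j
    exact ⟨Function.update m i₀ α, (mul_update_eq_update_mul hs m α).trans (by rw [hm])⟩

lemma injective_update_prod (hs : s i₀ = 1) (hb_inj : Function.Injective b)
    (hb : Set.range b = scaledSlice s i₀) :
    Function.Injective fun p : R × κ => Function.update (b p.2) i₀ p.1 := by
  rintro ⟨α, j⟩ ⟨α', j'⟩ h
  have hone : ∀ j, b j i₀ = 1 := fun j => by
    obtain ⟨m, hm, hmj⟩ : b j ∈ scaledSlice s i₀ := hb ▸ Set.mem_range_self j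
    simp [← hmj, hs, hm]
  have hα : α = α' := by simpa using congrFun h i₀
  subst hα
  refine Prod.ext rfl (hb_inj ?_)
  calc b j = Function.update (b j) i₀ 1 := (Function.update_eq_self_iff.2 (hone j).symm).symm
    _ = Function.update (b j') i₀ 1 := by
      simpa only [Function.update_idem] using congrArg (Function.update · i₀ 1) h
    _ = b j' := Function.update_eq_self_iff.2 (hone j').symm

lemma card_range_mulVec [Fintype ι] (hs : s i₀ = 1) (hb_inj : Function.Injective b)
    (hb : Set.range b = scaledSlice s i₀) :
    Nat.card (Set.range (b *ᵥ ·)) = Nat.card R * Nat.card κ := by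
  rw [Nat.card_range_eq_of_forall_eq_iff fun c c' => mulVec_eq_mulVec_iff_mul_eq_mul hb,
    range_mul_eq_range_update hs hb,
    Nat.card_range_of_injective (injective_update_prod hs hb_inj hb), Nat.card_prod]

end ScaledSlice

lemma card_filter_mulVec_eq_zero_le {k : ℕ} (hk : 0 < k) {ι κ : Type*} [Fintype ι] [Fintype κ]
    {s : ι → ZMod (2 ^ k)} {i₀ : ι} {b : κ → ι → ZMod (2 ^ k)} (hb_inj : Function.Injective b)
    (hb : Set.range b = scaledSlice s i₀) {c : ι → ZMod (2 ^ k)} (hc : b *ᵥ c ≠ 0) :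
    #{j | (b *ᵥ c) j = 0} ≤ #{j | (b *ᵥ c) j = 2 ^ (k - 1)} := by
  classical
  rcases Finset.eq_empty_or_nonempty {j | (b *ᵥ c) j = 0} with h | ⟨j₀, hj₀⟩
  · simp [h]
  obtain ⟨j₁, hj₁⟩ : ∃ j₁, (b *ᵥ c) j₁ ≠ 0 := by
    by_contra! h
    exact hc (funext h)
  obtain ⟨a, ha⟩ := exists_mul_eq_two_pow_pred hk hj₁
  have hmem : ∀ j, b j ∈ scaledSlice s i₀ := fun j => hb ▸ Set.mem_range_self j
  choose σ hσ using fun j =>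
    (hb ▸ add_smul_sub_mem_scaledSlice (hmem j) (hmem j₁) (hmem j₀) a : _ ∈ Set.range b)
  have hshift : ∀ j, (b *ᵥ c) (σ j) = (b *ᵥ c) j + 2 ^ (k - 1) := fun j => by
    have hz₀ : b j₀ ⬝ᵥ c = 0 := (Finset.mem_filter.1 hj₀).2
    rw [← ha]
    change b (σ j) ⬝ᵥ c = b j ⬝ᵥ c + a * (b j₁ ⬝ᵥ c)
    rw [hσ, add_dotProduct, smul_dotProduct, sub_dotProduct, hz₀, sub_zero, smul_eq_mul]
  refine Finset.card_le_card_of_injOn σ (fun j hj => ?_) (fun j _ j' _ h => hb_inj ?_)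
  · simp_all
  · simpa [hσ] using congrArg b h

lemma mul_two_pow_le_dStarK {k n : ℕ} (hk : 2 ≤ k) {ι : Type*} [Fintype ι]
    {s : ι → ZMod (2 ^ k)} {i₀ : ι} {b : Fin n → ι → ZMod (2 ^ k)}
    (hb_inj : Function.Injective b) (hb : Set.range b = scaledSlice s i₀)
    {x y : Fin n → ZMod (2 ^ k)} (hx : x ∈ Set.range (b *ᵥ ·)) (hy : y ∈ Set.range (b *ᵥ ·))
    (hxy : x ≠ y) : n * 2 ^ (k - 2) ≤ dStarK k n x y := by
  obtain ⟨cx, rfl⟩ := hx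
  obtain ⟨cy, rfl⟩ := hy
  have hsub : b *ᵥ (cy - cx) = b *ᵥ cy - b *ᵥ cx := mulVec_sub (A := b) cy cx
  have hc : b *ᵥ (cy - cx) ≠ 0 := by rwa [hsub, sub_ne_zero, ne_comm]
  simpa [dStarK, hsub] using
    card_mul_le_sum_wtStarK hk _ (card_filter_mulVec_eq_zero_le (by omega) hb_inj hb hc)

section Columns
variable {k : ℕ} {I : Fin k → ℕ}

def colScale (k : ℕ) (I : Fin k → ℕ) : colIdx k I → ZMod (2 ^ k) :=
  Sum.elim (fun _ => 1) fun p => 2 ^ (k - 1 - p.1.val)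

lemma colSet_eq_scaledSlice : colSet k I = scaledSlice (colScale k I) (Sum.inl ()) := by
  ext v
  constructor
  · rintro ⟨h1, h2⟩
    refine ⟨Sum.elim (fun _ => 1) fun p => (h2 p.1 p.2).choose, rfl, funext fun t => ?_⟩
    rcases t with ⟨⟨⟩⟩ | ⟨j, t⟩
    · exact (one_mul _).trans h1.symm
    · exact (h2 j t).choose_spec.symm
  · rintro ⟨m, h1, rfl⟩
    exact ⟨(one_mul _).trans h1, fun j t => ⟨m (Sum.inr ⟨j, t⟩), rfl⟩⟩

end Columns

theorem stmt_16_general (k r : ℕ) (hk : 2 ≤ k) (I : Fin k → ℕ)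
    (b : Fin (2 ^ r) → colIdx k I → ZMod (2 ^ k))
    (hb_inj : Function.Injective b)
    (hb_range : Set.range b = colSet k I)
    (a : ZMod (2 ^ k) → Fin (2 ^ (k - 1)) → ZMod 2)
    (ha_inj : Function.Injective a)
    (ha_compl : ∀ x : ZMod (2 ^ k), a (x + (2 ^ (k - 1) : ZMod (2 ^ k))) = a x + 1)
    (ha_dist : ∀ x y : ZMod (2 ^ k), x ≠ y → 2 ^ (k - 2) ≤ hammingDist (a x) (a y)) :
    (Nat.card (Submodule.span (ZMod (2 ^ k))
        (Set.range fun t : colIdx k I => fun i : Fin (2 ^ r) => b i t))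
        = 2 ^ r * 2 ^ k) ∧
    (∀ x ∈ Submodule.span (ZMod (2 ^ k))
        (Set.range fun t : colIdx k I => fun i : Fin (2 ^ r) => b i t),
      ∀ y ∈ Submodule.span (ZMod (2 ^ k))
        (Set.range fun t : colIdx k I => fun i : Fin (2 ^ r) => b i t),
        x ≠ y → 2 ^ r * 2 ^ (k - 2) ≤ dStarK k (2 ^ r) x y) ∧
    (((fun (x : Fin (2 ^ r) → ZMod (2 ^ k)) (p : Fin (2 ^ r) × Fin (2 ^ (k - 1))) =>
          a (x p.1) p.2) ''
        (Submodule.span (ZMod (2 ^ k))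
          (Set.range fun t : colIdx k I => fun i : Fin (2 ^ r) => b i t) :
            Set (Fin (2 ^ r) → ZMod (2 ^ k)))).ncard = 2 ^ r * 2 ^ k ∧
      ∀ u ∈ (fun (x : Fin (2 ^ r) → ZMod (2 ^ k))
              (p : Fin (2 ^ r) × Fin (2 ^ (k - 1))) => a (x p.1) p.2) ''
            (Submodule.span (ZMod (2 ^ k))
              (Set.range fun t : colIdx k I => fun i : Fin (2 ^ r) => b i t) :
                Set (Fin (2 ^ r) → ZMod (2 ^ k))),
        ∀ v ∈ (fun (x : Fin (2 ^ r) → ZMod (2 ^ k))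
              (p : Fin (2 ^ r) × Fin (2 ^ (k - 1))) => a (x p.1) p.2) ''
            (Submodule.span (ZMod (2 ^ k))
              (Set.range fun t : colIdx k I => fun i : Fin (2 ^ r) => b i t) :
                Set (Fin (2 ^ r) → ZMod (2 ^ k))),
          u ≠ v → 2 ^ r * 2 ^ (k - 2) ≤ hammingDist u v) := by
  classical
  have hb : Set.range b = scaledSlice (colScale k I) (Sum.inl ()) :=
    hb_range.trans colSet_eq_scaledSlice
  set D := Submodule.span (ZMod (2 ^ k))
    (Set.range fun t : colIdx k I => fun i : Fin (2 ^ r) => b i t)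
  have hD : (D : Set (Fin (2 ^ r) → ZMod (2 ^ k))) = Set.range (b *ᵥ ·) :=
    coe_span_col_eq_range_mulVec b
  have hcard : Nat.card D = 2 ^ r * 2 ^ k := by
    calc Nat.card D = Nat.card (Set.range (b *ᵥ ·)) := Nat.card_congr (Equiv.setCongr hD)
      _ = 2 ^ r * 2 ^ k := by
        rw [card_range_mulVec (s := colScale k I) rfl hb_inj hb, Nat.card_zmod, Nat.card_fin,
          mul_comm]
  have hdist : ∀ x ∈ D, ∀ y ∈ D, x ≠ y → 2 ^ r * 2 ^ (k - 2) ≤ dStarK k (2 ^ r) x y :=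
    fun x hx y hy => mul_two_pow_le_dStarK hk hb_inj hb (hD ▸ hx) (hD ▸ hy)
  have hgray_inj : Function.Injective fun (x : Fin (2 ^ r) → ZMod (2 ^ k))
      (p : Fin (2 ^ r) × Fin (2 ^ (k - 1))) => a (x p.1) p.2 :=
    fun x y h => funext fun i => ha_inj (funext fun j => congrFun h (i, j))
  refine ⟨hcard, hdist, ?_, ?_⟩
  · rw [Set.ncard_image_of_injective _ hgray_inj, ← Nat.card_coe_set_eq]
    exact hcard
  · rintro _ ⟨x, hx, rfl⟩ _ ⟨y, hy, rfl⟩ huv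
    exact (hdist x hx y hy (by rintro rfl; exact huv rfl)).trans
      (dStarK_le_hammingDist a ha_compl ha_dist x y)

/-- The code `D_I = H_I^⊥ ⊆ Z_{2^k}^n` generated by the rows of `B_I` is a linear
`(n, n·2^k, n·2^{k-2})*` code; consequently its Gray image `φ(D_I)` is a binary
Hadamard `(n·2^{k-1}, n·2^k, n·2^{k-2})` code. -/
theorem stmt_16 (k r : ℕ) (hk : 2 ≤ k) (I : Fin k → ℕ)
    (hI : ∑ j, (j.val + 1) * I j = r)
    (b : Fin (2 ^ r) → colIdx k I → ZMod (2 ^ k))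
    (hb_inj : Function.Injective b)
    (hb_range : Set.range b = colSet k I)
    (a : ZMod (2 ^ k) → Fin (2 ^ (k - 1)) → ZMod 2)
    (ha_inj : Function.Injective a)
    (ha_zero : a 0 = 0)
    (ha_compl : ∀ x : ZMod (2 ^ k), a (x + (2 ^ (k - 1) : ZMod (2 ^ k))) = a x + 1)
    (ha_dist : ∀ x y : ZMod (2 ^ k), x ≠ y → 2 ^ (k - 2) ≤ hammingDist (a x) (a y)) :
    (Nat.card (Submodule.span (ZMod (2 ^ k))
        (Set.range fun t : colIdx k I => fun i : Fin (2 ^ r) => b i t))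
        = 2 ^ r * 2 ^ k) ∧
    (∀ x ∈ Submodule.span (ZMod (2 ^ k))
        (Set.range fun t : colIdx k I => fun i : Fin (2 ^ r) => b i t),
      ∀ y ∈ Submodule.span (ZMod (2 ^ k))
        (Set.range fun t : colIdx k I => fun i : Fin (2 ^ r) => b i t),
        x ≠ y → 2 ^ r * 2 ^ (k - 2) ≤ dStarK k (2 ^ r) x y) ∧
    (((fun (x : Fin (2 ^ r) → ZMod (2 ^ k)) (p : Fin (2 ^ r) × Fin (2 ^ (k - 1))) =>
          a (x p.1) p.2) ''
        (Submodule.span (ZMod (2 ^ k))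
          (Set.range fun t : colIdx k I => fun i : Fin (2 ^ r) => b i t) :
            Set (Fin (2 ^ r) → ZMod (2 ^ k)))).ncard = 2 ^ r * 2 ^ k ∧
      ∀ u ∈ (fun (x : Fin (2 ^ r) → ZMod (2 ^ k))
              (p : Fin (2 ^ r) × Fin (2 ^ (k - 1))) => a (x p.1) p.2) ''
            (Submodule.span (ZMod (2 ^ k))
              (Set.range fun t : colIdx k I => fun i : Fin (2 ^ r) => b i t) :
                Set (Fin (2 ^ r) → ZMod (2 ^ k))),
        ∀ v ∈ (fun (x : Fin (2 ^ r) → ZMod (2 ^ k))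
              (p : Fin (2 ^ r) × Fin (2 ^ (k - 1))) => a (x p.1) p.2) ''
            (Submodule.span (ZMod (2 ^ k))
              (Set.range fun t : colIdx k I => fun i : Fin (2 ^ r) => b i t) :
                Set (Fin (2 ^ r) → ZMod (2 ^ k))),
          u ≠ v → 2 ^ r * 2 ^ (k - 2) ≤ hammingDist u v) :=
  stmt_16_general k r hk I b hb_inj hb_range a ha_inj ha_compl ha_dist
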